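/- arXiv:1908.03045 — 3 statements merged into one kernel-verified Lean document; each statement's English description precedes it below -/
import Mathlib

section
/- Let 𝔽 be a field, n > 1, and 𝒱 ⊆ 𝔽^n a finite point set. For α ∈ 𝔽 let 𝒱_α = {v ∈ 𝔽^{n−1} : (v,α) ∈ 𝒱}. Let ≺ be the lex order on 𝔽[x_1,…,x_n] with x_1 ≻ x_2 ≻ ⋯ ≻ x_n and ≺' the lex order on 𝔽[x_1,…,x_{n−1}] with x_1 ≻ ⋯ ≻ x_{n−1}. Then a monomial x^w = x_1^{w_1}⋯x_n^{w_n} is a standard monomial of I(𝒱) with respect to ≺ if and only if there are at least w_n + 1 elements α ∈ 𝔽 for which x_1^{w_1}⋯x_{n−1}^{w_{n−1}} is a standard monomial of I(𝒱_α) with respect to ≺'. -/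
open MvPolynomial

/-- Monomials of `𝔽[x_1,…,x_n]` identified with their exponent vectors. -/
abbrev Mon (n : ℕ) := Fin n →₀ ℕ

/-- A linear order on monomials is a term order if `1` (i.e. the zero exponent
vector) is minimal and the order is compatible with multiplication by monomials. -/
def IsTermOrder {n : ℕ} (lin : LinearOrder (Mon n)) : Prop :=
  (∀ u : Mon n, lin.le 0 u) ∧
    ∀ u v w : Mon n, lin.le u v → lin.le (u + w) (v + w)

/-- The strict lexicographic comparison of exponent vectors induced by the variable
ordering `x_{σ 0} ≻ x_{σ 1} ≻ ⋯ ≻ x_{σ (n-1)}`. -/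
def lexLt {n : ℕ} (σ : Equiv.Perm (Fin n)) (u v : Mon n) : Prop :=
  ∃ j : Fin n, u (σ j) < v (σ j) ∧ ∀ i : Fin n, i < j → u (σ i) = v (σ i)

/-- `lin` is the lexicographic term order induced by the variable ordering
`x_{σ 0} ≻ x_{σ 1} ≻ ⋯ ≻ x_{σ (n-1)}`. -/
def IsLexOrder {n : ℕ} (σ : Equiv.Perm (Fin n)) (lin : LinearOrder (Mon n)) : Prop :=
  ∀ u v : Mon n, lin.lt u v ↔ lexLt σ u v

/-- `m` is the leading monomial of `f` with respect to the monomial order `lin`. -/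
def IsLeadMon {n : ℕ} {F : Type*} [CommSemiring F] (lin : LinearOrder (Mon n))
    (f : MvPolynomial (Fin n) F) (m : Mon n) : Prop :=
  m ∈ f.support ∧ ∀ m' ∈ f.support, lin.le m' m

/-- The set of standard monomials of an ideal `I` with respect to the monomial
order `lin`: monomials that are not the leading monomial of any nonzero `f ∈ I`. -/
def stdMon {n : ℕ} {F : Type*} [CommSemiring F] (lin : LinearOrder (Mon n))
    (I : Ideal (MvPolynomial (Fin n) F)) : Set (Mon n) :=
  { m | ¬ ∃ f ∈ I, f ≠ 0 ∧ IsLeadMon lin f m }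

/-- The vanishing ideal of a point set `V ⊆ F^n`. -/
def vanishIdeal {n : ℕ} {F : Type*} [CommRing F] (V : Set (Fin n → F)) :
    Ideal (MvPolynomial (Fin n) F) where
  carrier := { f | ∀ v ∈ V, MvPolynomial.eval v f = 0 }
  add_mem' := by
    intro a b ha hb v hv
    simp [map_add, ha v hv, hb v hv]
  zero_mem' := by intro v hv; simp
  smul_mem' := by
    intro c f hf v hv
    simp [smul_eq_mul, hf v hv]

/-- A finite point set (in `{0,…,k-1}^n`, over any field) is extremal if its vanishing
ideal has the same standard monomials for every lexicographic term order. -/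
def IsExtremal {n : ℕ} {F : Type*} [CommRing F] (V : Set (Fin n → F)) : Prop :=
  ∀ (σ₁ σ₂ : Equiv.Perm (Fin n)) (lin₁ lin₂ : LinearOrder (Mon n)),
    IsLexOrder σ₁ lin₁ → IsLexOrder σ₂ lin₂ →
      stdMon lin₁ (vanishIdeal V) = stdMon lin₂ (vanishIdeal V)

/-- Embedding of a point of `{0,…,k-1}^n` into `F^n`. -/
def toField {n k : ℕ} (F : Type*) [Field F] (w : Fin n → Fin k) : Fin n → F :=
  fun i => ((w i : ℕ) : F)

/-- Identification of a point of `{0,…,k-1}^n` with an exponent vector in `ℕ^n`. -/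
noncomputable def toExp {n k : ℕ} (w : Fin n → Fin k) : Mon n :=
  Finsupp.equivFunOnFinite.symm fun i => (w i : ℕ)

/-- The downshift `D_i(V)` of `V ⊆ {0,…,k-1}^n` at coordinate `i`: its `i`-section at
each choice of the other coordinates is `{0,1,…,m-1}` where `m` is the size of the
corresponding `i`-section of `V`. -/
def downshift {n k : ℕ} (V : Finset (Fin n → Fin k)) (i : Fin n) :
    Finset (Fin n → Fin k) :=
  Finset.univ.filter fun w =>
    (w i : ℕ) < (Finset.univ.filter fun α : Fin k => Function.update w i α ∈ V).card

/-- The iterated downshift `D_{σ(n-1)}(D_{σ(n-2)}(⋯(D_{σ 0}(V))))`,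
i.e. downshifts are applied at coordinates `σ 0, σ 1, …, σ (n-1)` in this order. -/
def iterDownshift {n k : ℕ} (σ : Equiv.Perm (Fin n)) (V : Finset (Fin n → Fin k)) :
    Finset (Fin n → Fin k) :=
  (List.ofFn fun j : Fin n => σ j).foldl downshift V

/-- A polynomial is degree dominated (with dominating term `x^w`) if it equals
`x^w + Σ αᵢ x^{vᵢ}` where each `x^{vᵢ}` divides `x^w`. -/
def IsDegDominated {n : ℕ} {F : Type*} [CommSemiring F]
    (f : MvPolynomial (Fin n) F) : Prop :=
  ∃ w : Mon n, MvPolynomial.coeff w f = 1 ∧ ∀ v ∈ f.support, v ≤ w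

/-- `G` is a Gröbner basis of `I` with respect to the monomial order `lin`:
`G ⊆ I` and for every nonzero `f ∈ I` some `g ∈ G` has leading monomial dividing
the leading monomial of `f` (divisibility of monomials being `≤` of exponents). -/
def IsGroebner {n : ℕ} {F : Type*} [CommSemiring F] (lin : LinearOrder (Mon n))
    (G : Finset (MvPolynomial (Fin n) F)) (I : Ideal (MvPolynomial (Fin n) F)) : Prop :=
  (∀ g ∈ G, g ∈ I) ∧
    ∀ f ∈ I, f ≠ 0 → ∀ m : Mon n, IsLeadMon lin f m →
      ∃ g ∈ G, ∃ mg : Mon n, IsLeadMon lin g mg ∧ mg ≤ m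

/-- `G` is a universal Gröbner basis of `I` if it is a Gröbner basis for every term order. -/
def IsUnivGroebner {n : ℕ} {F : Type*} [CommSemiring F]
    (G : Finset (MvPolynomial (Fin n) F)) (I : Ideal (MvPolynomial (Fin n) F)) : Prop :=
  ∀ lin : LinearOrder (Mon n), IsTermOrder lin → IsGroebner lin G I

/-- A term order is an elimination order with respect to `x_i` if `x_i` is greater
than every monomial not involving `x_i`. -/
def IsElimOrder {n : ℕ} (lin : LinearOrder (Mon n)) (i : Fin n) : Prop :=
  IsTermOrder lin ∧ ∀ m : Mon n, m i = 0 → lin.lt m (Finsupp.single i 1)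

/-- A set system `𝓕` shatters `S` if every subset of `S` is the intersection of `S`
with a member of `𝓕`. -/
def Shatters {n : ℕ} (𝓕 : Finset (Finset (Fin n))) (S : Finset (Fin n)) : Prop :=
  ∀ T ⊆ S, ∃ Fm ∈ 𝓕, Fm ∩ S = T

open scoped Classical in
/-- The family `Sh(𝓕)` of sets shattered by `𝓕`. -/
noncomputable def shatteredFamily {n : ℕ} (𝓕 : Finset (Finset (Fin n))) :
    Finset (Finset (Fin n)) :=
  Finset.univ.filter fun S => Shatters 𝓕 S

/-- A set system is shattering-extremal if it shatters exactly `|𝓕|` sets. -/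
def IsSExtremal {n : ℕ} (𝓕 : Finset (Finset (Fin n))) : Prop :=
  (shatteredFamily 𝓕).card = 𝓕.card

/-- The characteristic vector of a set, as a point of `F^n`. -/
def charVec {n : ℕ} (F : Type*) [Field F] (Fm : Finset (Fin n)) : Fin n → F :=
  fun i => if i ∈ Fm then 1 else 0

/-- The squarefree monomial `∏_{i ∈ S} x_i` associated to a set `S ⊆ [n]`,
as an exponent vector. -/
noncomputable def setMon {n : ℕ} (S : Finset (Fin n)) : Mon n :=
  Finsupp.equivFunOnFinite.symm fun i => if i ∈ S then 1 else 0

/-- The polynomial `f_{S,H} = (∏_{i∈H} x_i) ⬝ ∏_{i∈S∖H} (x_i - 1)`. -/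
noncomputable def fSH {n : ℕ} (F : Type*) [Field F] (S H : Finset (Fin n)) :
    MvPolynomial (Fin n) F :=
  (∏ i ∈ H, X i) * ∏ i ∈ S \ H, (X i - 1)

/-- The downshift `D_i(𝓕)` of a set system. -/
def dshiftSet {n : ℕ} (𝓕 : Finset (Finset (Fin n))) (i : Fin n) :
    Finset (Finset (Fin n)) :=
  𝓕.image (fun Fm => Fm.erase i) ∪ 𝓕.filter fun Fm => i ∈ Fm ∧ Fm.erase i ∈ 𝓕

/-- The iterated downshift `D_{σ(n-1)}(⋯(D_{σ 0}(𝓕)))` of a set system: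
downshifts are applied at `σ 0, σ 1, …, σ (n-1)` in this order. -/
def iterDshiftSet {n : ℕ} (σ : Equiv.Perm (Fin n)) (𝓕 : Finset (Finset (Fin n))) :
    Finset (Finset (Fin n)) :=
  (List.ofFn fun j : Fin n => σ j).foldl dshiftSet 𝓕

/-- Restriction of an exponent vector in `ℕ^{n+1}` to its first `n` coordinates. -/
noncomputable def restrictMon {n : ℕ} (w : Mon (n + 1)) : Mon n :=
  Finsupp.equivFunOnFinite.symm fun i => w i.castSucc

/-!
Order monomials lexicographically with `x_n` least, write `x = (x', x_n)` and `w = (w', w_n)`,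
and let `c_{w'}(f) ∈ 𝔽[x_n]` be the coefficient of `x'^{w'}` in `f`. Then `x^w` is the leading
monomial of `f` exactly when every monomial of `f` has `x'`-part at most `x'^{w'}` and
`c_{w'}(f)` has degree `w_n`.

If `f ∈ I(𝒱)` had leading monomial `x^w`, then `c_{w'}(f)`, of degree `w_n`, would not vanish at
one of `w_n + 1` given values `α`, and `f(x', α) ∈ I(𝒱_α)` would have leading monomial `x'^{w'}`.
Conversely, suppose `x'^{w'}` is standard for `I(𝒱_α)` for a set `S` of at most `w_n` values `α`.
For every other value `α` of the last coordinate on `𝒱` pick `g_α = x'^{w'} + (lower terms)`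
in `I(𝒱_α)`, glue the `g_α` by Lagrange interpolation in `x_n`, and multiply by a monic
polynomial in `x_n` of degree `w_n` vanishing on `S`: the result lies in `I(𝒱)` and has leading
monomial `x^w`.
-/

noncomputable def snocMon {n : ℕ} (u : Mon n) (j : ℕ) : Mon (n + 1) :=
  Finsupp.equivFunOnFinite.symm (Fin.snoc u j)

section Monomials

variable {n : ℕ}

@[simp] lemma snocMon_apply_castSucc (u : Mon n) (j : ℕ) (i : Fin n) :
    snocMon u j i.castSucc = u i := by
  simp [snocMon]

@[simp] lemma snocMon_apply_last (u : Mon n) (j : ℕ) : snocMon u j (Fin.last n) = j := by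
  simp [snocMon]

@[simp] lemma restrictMon_apply (m : Mon (n + 1)) (i : Fin n) :
    restrictMon m i = m i.castSucc := by
  simp [restrictMon]

@[simp] lemma restrictMon_snocMon (u : Mon n) (j : ℕ) : restrictMon (snocMon u j) = u := by
  ext i; simp

@[simp] lemma snocMon_restrictMon (m : Mon (n + 1)) :
    snocMon (restrictMon m) (m (Fin.last n)) = m := by
  ext i
  cases i using Fin.lastCases <;> simp

lemma snocMon_eq_iff {u : Mon n} {j : ℕ} {m : Mon (n + 1)} :
    snocMon u j = m ↔ u = restrictMon m ∧ j = m (Fin.last n) := by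
  constructor
  · rintro rfl
    simp
  · rintro ⟨rfl, rfl⟩
    exact snocMon_restrictMon m

lemma mapDomain_castSucc_add_single_last (u : Mon n) (j : ℕ) :
    u.mapDomain Fin.castSucc + Finsupp.single (Fin.last n) j = snocMon u j := by
  ext i
  cases i using Fin.lastCases with
  | last =>
    rw [Finsupp.add_apply, Finsupp.mapDomain_of_notMem_range _ _ fun ⟨i, hi⟩ =>
      (Fin.castSucc_lt_last i).ne hi]
    simp
  | cast i =>
    rw [Finsupp.add_apply, Finsupp.mapDomain_apply (Fin.castSucc_injective n)]
    simp

end Monomials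

section LexOrder

variable {n : ℕ}

lemma lexLt_refl_succ_iff {m w : Mon (n + 1)} :
    lexLt (Equiv.refl _) m w ↔ lexLt (Equiv.refl _) (restrictMon m) (restrictMon w) ∨
      restrictMon m = restrictMon w ∧ m (Fin.last n) < w (Fin.last n) := by
  simp only [lexLt, Equiv.refl_apply]
  constructor
  · rintro ⟨j, hj, heq⟩
    cases j using Fin.lastCases with
    | last =>
      refine Or.inr ⟨?_, hj⟩
      ext i
      simpa using heq i.castSucc (Fin.castSucc_lt_last i)
    | cast j =>
      exact Or.inl ⟨j, by simpa using hj, fun i hi => by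
        simpa using heq i.castSucc (Fin.castSucc_lt_castSucc_iff.2 hi)⟩
  · rintro (⟨j, hj, heq⟩ | ⟨heq, hlt⟩)
    · refine ⟨j.castSucc, by simpa using hj, fun i hi => ?_⟩
      cases i using Fin.lastCases with
      | last => exact absurd hi (Fin.castSucc_lt_last j).not_gt
      | cast i => simpa using heq i (Fin.castSucc_lt_castSucc_iff.1 hi)
    · refine ⟨Fin.last n, hlt, fun i hi => ?_⟩
      cases i using Fin.lastCases with
      | last => exact absurd hi (lt_irrefl _)
      | cast i => simpa using DFunLike.congr_fun heq i

-- `Mon n` also carries the pointwise order of `Finsupp` as an instance, so order lemmas about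
-- `lin` are applied with `lin`'s structure passed explicitly.
lemma IsLexOrder.le_iff_eq_or_lexLt {σ : Equiv.Perm (Fin n)} {lin : LinearOrder (Mon n)}
    (h : IsLexOrder σ lin) {u v : Mon n} : lin.le u v ↔ u = v ∨ lexLt σ u v :=
  (@le_iff_eq_or_lt (Mon n) lin.toPartialOrder u v).trans (or_congr_right (h u v))

variable {lin : LinearOrder (Mon (n + 1))} {lin' : LinearOrder (Mon n)}

lemma IsLexOrder.le_iff_restrictMon (hlin : IsLexOrder (Equiv.refl _) lin)
    (hlin' : IsLexOrder (Equiv.refl _) lin') {m w : Mon (n + 1)} :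
    lin.le m w ↔ lin'.lt (restrictMon m) (restrictMon w) ∨
      restrictMon m = restrictMon w ∧ m (Fin.last n) ≤ w (Fin.last n) := by
  rw [hlin.le_iff_eq_or_lexLt, lexLt_refl_succ_iff, hlin']
  constructor
  · rintro (rfl | h | ⟨h, hlt⟩)
    · exact Or.inr ⟨rfl, le_rfl⟩
    · exact Or.inl h
    · exact Or.inr ⟨h, hlt.le⟩
  · rintro (h | ⟨h, hle⟩)
    · exact Or.inr (Or.inl h)
    · rcases hle.lt_or_eq with hlt | heq
      · exact Or.inr (Or.inr ⟨h, hlt⟩)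
      · left
        rw [← snocMon_restrictMon m, ← snocMon_restrictMon w, h, heq]

end LexOrder

lemma IsLeadMon.ne_zero {n : ℕ} {R : Type*} [CommSemiring R] {lin : LinearOrder (Mon n)}
    {f : MvPolynomial (Fin n) R} {m : Mon n} (h : IsLeadMon lin f m) : f ≠ 0 := by
  rintro rfl
  simpa using h.1

lemma exists_sub_monomial_lt_of_notMem_stdMon {n : ℕ} {F : Type*} [Field F]
    {lin : LinearOrder (Mon n)} {I : Ideal (MvPolynomial (Fin n) F)} {u : Mon n}
    (hu : u ∉ stdMon lin I) : ∃ g ∈ I, ∀ v ∈ (g - monomial u 1).support, lin.lt v u := by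
  obtain ⟨f, hfI, -, hfu, hlead⟩ := not_not.1 hu
  have hc : coeff u f ≠ 0 := mem_support_iff.1 hfu
  refine ⟨C (coeff u f)⁻¹ * f, I.mul_mem_left _ hfI, fun v hv => ?_⟩
  rw [mem_support_iff, coeff_sub, coeff_C_mul, coeff_monomial] at hv
  by_cases hvu : v = u
  · subst hvu
    simp [hc] at hv
  · rw [if_neg (Ne.symm hvu), sub_zero] at hv
    exact @lt_of_le_of_ne _ lin.toPartialOrder _ _
      (hlead v (mem_support_iff.2 (right_ne_zero_of_mul hv))) hvu

section LastVariable

variable {n : ℕ} {R : Type*} [CommRing R]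

noncomputable def substLast (α : R) : MvPolynomial (Fin (n + 1)) R →+* MvPolynomial (Fin n) R :=
  eval₂Hom C (Fin.snoc X (C α))

lemma eval_substLast (α : R) (v : Fin n → R) (f : MvPolynomial (Fin (n + 1)) R) :
    eval v (substLast α f) = eval (Fin.snoc v α) f := by
  have : (eval v).comp (substLast (n := n) α) = eval (Fin.snoc v α) := by
    apply ringHom_ext
    · intro a
      simp [substLast]
    · intro i
      cases i using Fin.lastCases <;> simp [substLast]
  exact RingHom.congr_fun this f

lemma substLast_monomial (α : R) (m : Mon (n + 1)) (c : R) :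
    substLast α (monomial m c) = monomial (restrictMon m) (c * α ^ m (Fin.last n)) := by
  rw [substLast, eval₂Hom_monomial, Finsupp.prod_fintype _ _ fun i => pow_zero _,
    monomial_eq, Finsupp.prod_fintype _ _ fun i => pow_zero _, Fin.prod_univ_castSucc]
  simp only [Fin.snoc_castSucc, Fin.snoc_last, restrictMon_apply, map_mul, ← C_pow]
  ring

noncomputable def lastCoeff (u : Mon n) (f : MvPolynomial (Fin (n + 1)) R) : Polynomial R :=
  ∑ m ∈ f.support with restrictMon m = u, Polynomial.monomial (m (Fin.last n)) (coeff m f)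

lemma coeff_lastCoeff (u : Mon n) (f : MvPolynomial (Fin (n + 1)) R) (j : ℕ) :
    (lastCoeff u f).coeff j = coeff (snocMon u j) f := by
  simp only [lastCoeff, Polynomial.finsetSum_coeff, Polynomial.coeff_monomial]
  rw [Finset.sum_eq_single (snocMon u j)]
  · simp
  · intro m hm hne
    rw [Finset.mem_filter] at hm
    exact if_neg fun h => hne (snocMon_eq_iff.2 ⟨hm.2.symm, h.symm⟩).symm
  · intro h
    rw [if_pos (snocMon_apply_last _ _)]
    by_contra hc
    exact h (Finset.mem_filter.2 ⟨mem_support_iff.2 hc, restrictMon_snocMon _ _⟩)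

lemma coeff_substLast (α : R) (f : MvPolynomial (Fin (n + 1)) R) (u : Mon n) :
    coeff u (substLast α f) = (lastCoeff u f).eval α := by
  conv_lhs => rw [← f.support_sum_monomial_coeff]
  rw [map_sum, coeff_sum, lastCoeff, Polynomial.eval_finsetSum, Finset.sum_filter]
  refine Finset.sum_congr rfl fun m _ => ?_
  rw [substLast_monomial, coeff_monomial]
  split_ifs <;> simp

lemma exists_restrictMon_eq_of_mem_support_substLast {α : R} {f : MvPolynomial (Fin (n + 1)) R}
    {u : Mon n} (hu : u ∈ (substLast α f).support) : ∃ m ∈ f.support, restrictMon m = u := by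
  rw [mem_support_iff, coeff_substLast] at hu
  by_contra! h
  apply hu
  rw [lastCoeff, Finset.filter_false_of_mem h, Finset.sum_empty, Polynomial.eval_zero]

noncomputable def liftLast (q : Polynomial R) : MvPolynomial (Fin (n + 1)) R :=
  Polynomial.aeval (X (Fin.last n)) q

lemma eval_liftLast (x : Fin (n + 1) → R) (q : Polynomial R) :
    eval x (liftLast q) = q.eval (x (Fin.last n)) := by
  simpa [liftLast, MvPolynomial.coe_aeval_eq_eval] using
    (Polynomial.aeval_algHom_apply (MvPolynomial.aeval x) (X (Fin.last n)) q).symm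

lemma coeff_rename_castSucc_mul_liftLast (g : MvPolynomial (Fin n) R) (q : Polynomial R)
    (m : Mon (n + 1)) :
    coeff m (rename Fin.castSucc g * liftLast q) =
      coeff (restrictMon m) g * q.coeff (m (Fin.last n)) := by
  induction q using Polynomial.induction_on' with
  | add p q hp hq =>
    simp only [liftLast, map_add, mul_add, coeff_add, Polynomial.coeff_add] at hp hq ⊢
    rw [hp, hq]
  | monomial k c =>
    induction g using MvPolynomial.induction_on' with
    | monomial u c' =>
      rw [liftLast, Polynomial.aeval_monomial, rename_monomial, algebraMap_eq,
        C_mul_X_pow_eq_monomial, monomial_mul, coeff_monomial, mapDomain_castSucc_add_single_last,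
        Polynomial.coeff_monomial, coeff_monomial]
      by_cases hu : u = restrictMon m <;> by_cases hk : k = m (Fin.last n) <;>
        simp [hu, hk, snocMon_eq_iff, mul_comm]
    | add p q hp hq =>
      simp only [map_add, add_mul, coeff_add, hp, hq]

lemma eval_rename_castSucc_mul_liftLast (x : Fin (n + 1) → R) (g : MvPolynomial (Fin n) R)
    (q : Polynomial R) :
    eval x (rename Fin.castSucc g * liftLast q) =
      eval (Fin.init x) g * q.eval (x (Fin.last n)) := by
  rw [map_mul, eval_rename, eval_liftLast]
  rfl

lemma restrictMon_mem_support_of_mem_support_rename_castSucc_mul_liftLast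
    {g : MvPolynomial (Fin n) R} {q : Polynomial R} {m : Mon (n + 1)}
    (hm : m ∈ (rename Fin.castSucc g * liftLast q).support) : restrictMon m ∈ g.support := by
  rw [mem_support_iff, coeff_rename_castSucc_mul_liftLast] at hm
  exact mem_support_iff.2 (left_ne_zero_of_mul hm)

end LastVariable

section LeadingMonomial

variable {n : ℕ} {R : Type*} [CommRing R]
  {lin : LinearOrder (Mon (n + 1))} {lin' : LinearOrder (Mon n)}

lemma IsLeadMon.natDegree_lastCoeff (hlin : IsLexOrder (Equiv.refl _) lin)
    (hlin' : IsLexOrder (Equiv.refl _) lin') {f : MvPolynomial (Fin (n + 1)) R} {w : Mon (n + 1)}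
    (hf : IsLeadMon lin f w) : (lastCoeff (restrictMon w) f).natDegree = w (Fin.last n) := by
  refine Polynomial.natDegree_eq_of_le_of_coeff_ne_zero ?_ ?_
  · refine Polynomial.natDegree_le_iff_coeff_eq_zero.2 fun j hj => ?_
    rw [coeff_lastCoeff, ← notMem_support_iff]
    intro hmem
    rcases (hlin.le_iff_restrictMon hlin').1 (hf.2 _ hmem) with h | ⟨-, h⟩
    · simp only [restrictMon_snocMon] at h
      exact @lt_irrefl _ lin'.toPreorder _ h
    · simp only [snocMon_apply_last] at h
      omega
  · rw [coeff_lastCoeff, snocMon_restrictMon]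
    exact mem_support_iff.1 hf.1

lemma IsLeadMon.isLeadMon_substLast (hlin : IsLexOrder (Equiv.refl _) lin)
    (hlin' : IsLexOrder (Equiv.refl _) lin') {f : MvPolynomial (Fin (n + 1)) R} {w : Mon (n + 1)}
    (hf : IsLeadMon lin f w) {α : R} (hα : (lastCoeff (restrictMon w) f).eval α ≠ 0) :
    IsLeadMon lin' (substLast α f) (restrictMon w) := by
  refine ⟨mem_support_iff.2 (by rwa [coeff_substLast]), fun u hu => ?_⟩
  obtain ⟨m, hm, rfl⟩ := exists_restrictMon_eq_of_mem_support_substLast hu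
  rcases (hlin.le_iff_restrictMon hlin').1 (hf.2 m hm) with h | ⟨h, -⟩
  · exact @le_of_lt _ lin'.toPreorder _ _ h
  · exact @le_of_eq _ lin'.toPreorder _ _ h

lemma isLeadMon_rename_monomial_mul_liftLast_add (hlin : IsLexOrder (Equiv.refl _) lin)
    (hlin' : IsLexOrder (Equiv.refl _) lin') {u : Mon n} {p : Polynomial R} (hp : p ≠ 0)
    {r : MvPolynomial (Fin (n + 1)) R} (hr : ∀ m ∈ r.support, lin'.lt (restrictMon m) u) :
    IsLeadMon lin (rename Fin.castSucc (monomial u 1) * liftLast p + r)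
      (snocMon u p.natDegree) := by
  have hcoeff : ∀ m, coeff m (rename Fin.castSucc (monomial u 1) * liftLast p) =
      if restrictMon m = u then p.coeff (m (Fin.last n)) else 0 := by
    intro m
    rw [coeff_rename_castSucc_mul_liftLast, coeff_monomial]
    by_cases hmu : restrictMon m = u
    · simp [hmu]
    · simp [hmu, Ne.symm hmu]
  have hr_coeff : ∀ m, restrictMon m = u → coeff m r = 0 := fun m hm =>
    notMem_support_iff.1 fun h => @lt_irrefl _ lin'.toPreorder u (hm ▸ hr m h)
  refine ⟨mem_support_iff.2 ?_, fun m hm => (hlin.le_iff_restrictMon hlin').2 ?_⟩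
  · rw [coeff_add, hcoeff, hr_coeff _ (restrictMon_snocMon _ _), if_pos (restrictMon_snocMon _ _),
      snocMon_apply_last, add_zero]
    exact Polynomial.leadingCoeff_ne_zero.2 hp
  · rw [restrictMon_snocMon, snocMon_apply_last]
    rw [mem_support_iff, coeff_add, hcoeff] at hm
    by_cases hmu : restrictMon m = u
    · rw [if_pos hmu, hr_coeff m hmu, add_zero] at hm
      exact Or.inr ⟨hmu, Polynomial.le_natDegree_of_ne_zero hm⟩
    · rw [if_neg hmu, zero_add] at hm
      exact Or.inl (hr m (mem_support_iff.2 hm))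

end LeadingMonomial

section Interpolation

variable {n : ℕ} {F : Type*} [Field F] [DecidableEq F]

noncomputable def interpolateLast (h : MvPolynomial (Fin n) F) (g : F → MvPolynomial (Fin n) F)
    (T : Finset F) (p : Polynomial F) : MvPolynomial (Fin (n + 1)) F :=
  rename Fin.castSucc h * liftLast p +
    ∑ α ∈ T, rename Fin.castSucc (g α - h) * liftLast (p * Lagrange.basis T id α)

lemma eval_interpolateLast_of_mem (h : MvPolynomial (Fin n) F) (g : F → MvPolynomial (Fin n) F)
    {T : Finset F} (p : Polynomial F) {x : Fin (n + 1) → F} (hx : x (Fin.last n) ∈ T) :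
    eval x (interpolateLast h g T p) =
      eval (Fin.init x) (g (x (Fin.last n))) * p.eval (x (Fin.last n)) := by
  have hself : (Lagrange.basis T id (x (Fin.last n))).eval (x (Fin.last n)) = 1 :=
    Lagrange.eval_basis_self (Set.injOn_id _) hx
  rw [interpolateLast, map_add, map_sum, Finset.sum_eq_single_of_mem _ hx fun α _ hne => ?_]
  · rw [eval_rename_castSucc_mul_liftLast, eval_rename_castSucc_mul_liftLast, Polynomial.eval_mul,
      hself, map_sub]
    ring
  · have hzero : (Lagrange.basis T id α).eval (x (Fin.last n)) = 0 :=
      Lagrange.eval_basis_of_ne (v := id) hne hx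
    rw [eval_rename_castSucc_mul_liftLast, Polynomial.eval_mul, hzero, mul_zero, mul_zero]

lemma eval_interpolateLast_of_isRoot (h : MvPolynomial (Fin n) F) (g : F → MvPolynomial (Fin n) F)
    (T : Finset F) {p : Polynomial F} {x : Fin (n + 1) → F} (hx : p.IsRoot (x (Fin.last n))) :
    eval x (interpolateLast h g T p) = 0 := by
  simp only [interpolateLast, map_add, map_sum, eval_rename_castSucc_mul_liftLast,
    Polynomial.eval_mul, hx.eq_zero]
  simp

lemma isLeadMon_interpolateLast {lin : LinearOrder (Mon (n + 1))} {lin' : LinearOrder (Mon n)}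
    (hlin : IsLexOrder (Equiv.refl _) lin) (hlin' : IsLexOrder (Equiv.refl _) lin') {u : Mon n}
    {g : F → MvPolynomial (Fin n) F} {T : Finset F} {p : Polynomial F} (hp : p ≠ 0)
    (hg : ∀ α ∈ T, ∀ v ∈ (g α - monomial u 1).support, lin'.lt v u) :
    IsLeadMon lin (interpolateLast (monomial u 1) g T p) (snocMon u p.natDegree) := by
  refine isLeadMon_rename_monomial_mul_liftLast_add hlin hlin' hp fun m hm => ?_
  obtain ⟨α, hα, hmα⟩ := Finset.mem_biUnion.1 (support_sum hm)
  exact hg α hα _ (restrictMon_mem_support_of_mem_support_rename_castSucc_mul_liftLast hmα)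

end Interpolation

lemma Polynomial.exists_monic_natDegree_eq_isRoot {R : Type*} [CommRing R] [Nontrivial R]
    {S : Finset R} {d : ℕ} (hS : S.card ≤ d) :
    ∃ p : Polynomial R, p.Monic ∧ p.natDegree = d ∧ ∀ α ∈ S, p.IsRoot α := by
  refine ⟨X ^ (d - S.card) * Lagrange.nodal S id, (monic_X_pow _).mul Lagrange.nodal_monic,
    ?_, fun α hα => ?_⟩
  · rw [(monic_X_pow _).natDegree_mul Lagrange.nodal_monic, natDegree_X_pow,
      Lagrange.natDegree_nodal]
    omega
  · have hnodal : (Lagrange.nodal S id).eval α = 0 := Lagrange.eval_nodal_at_node (v := id) hα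
    simp [hnodal]

section Sections

variable {n : ℕ} {F : Type*} [Field F] {lin : LinearOrder (Mon (n + 1))}
  {lin' : LinearOrder (Mon n)}

lemma mem_stdMon_of_many_sections (V : Finset (Fin (n + 1) → F))
    (hlin : IsLexOrder (Equiv.refl _) lin) (hlin' : IsLexOrder (Equiv.refl _) lin')
    (w : Mon (n + 1)) (A : Finset F) (hA : w (Fin.last n) + 1 ≤ A.card)
    (hstd : ∀ α ∈ A, restrictMon w ∈ stdMon lin' (vanishIdeal {v | Fin.snoc v α ∈ V})) :
    w ∈ stdMon lin (vanishIdeal (V : Set (Fin (n + 1) → F))) := by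
  rintro ⟨f, hfI, -, hlead⟩
  obtain ⟨α, hαA, hα⟩ : ∃ α ∈ A, (lastCoeff (restrictMon w) f).eval α ≠ 0 := by
    by_contra! h
    have hdeg := hlead.natDegree_lastCoeff hlin hlin'
    have hzero := Polynomial.eq_zero_of_natDegree_lt_card_of_eval_eq_zero' _ A h (by omega)
    have hw := mem_support_iff.1 hlead.1
    rw [← snocMon_restrictMon w, ← coeff_lastCoeff, hzero, Polynomial.coeff_zero] at hw
    exact hw rfl
  have hleadα := hlead.isLeadMon_substLast hlin hlin' hα
  exact hstd α hαA ⟨substLast α f, fun v hv => (eval_substLast α v f).trans (hfI _ hv),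
    hleadα.ne_zero, hleadα⟩

lemma notMem_stdMon_of_few_sections (V : Finset (Fin (n + 1) → F))
    (hlin : IsLexOrder (Equiv.refl _) lin) (hlin' : IsLexOrder (Equiv.refl _) lin')
    (w : Mon (n + 1))
    (hfew : ∀ A : Finset F, (∀ α ∈ A, restrictMon w ∈
      stdMon lin' (vanishIdeal {v | Fin.snoc v α ∈ V})) → A.card ≤ w (Fin.last n)) :
    w ∉ stdMon lin (vanishIdeal (V : Set (Fin (n + 1) → F))) := by
  classical
  set lasts := V.image (· (Fin.last n))
  set S := lasts.filter fun α => restrictMon w ∈ stdMon lin' (vanishIdeal {v | Fin.snoc v α ∈ V})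
  have hS : S.card ≤ w (Fin.last n) := hfew S fun α hα => (Finset.mem_filter.1 hα).2
  have hg : ∀ α ∈ lasts \ S, ∃ g ∈ vanishIdeal {v | Fin.snoc v α ∈ V},
      ∀ u ∈ (g - monomial (restrictMon w) 1).support, lin'.lt u (restrictMon w) := by
    intro α hα
    rw [Finset.mem_sdiff, Finset.mem_filter, not_and] at hα
    exact exists_sub_monomial_lt_of_notMem_stdMon (hα.2 hα.1)
  choose! g hgI hglt using hg
  obtain ⟨p, hmonic, hp, hroot⟩ := Polynomial.exists_monic_natDegree_eq_isRoot hS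
  have hlead : IsLeadMon lin (interpolateLast (monomial (restrictMon w) 1) g (lasts \ S) p) w := by
    have := isLeadMon_interpolateLast hlin hlin' hmonic.ne_zero hglt
    rwa [hp, snocMon_restrictMon] at this
  refine fun hw => hw ⟨_, fun x hx => ?_, hlead.ne_zero, hlead⟩
  by_cases hxS : x (Fin.last n) ∈ S
  · exact eval_interpolateLast_of_isRoot _ _ _ (hroot _ hxS)
  · have hxT : x (Fin.last n) ∈ lasts \ S :=
      Finset.mem_sdiff.2 ⟨Finset.mem_image_of_mem _ hx, hxS⟩
    rw [eval_interpolateLast_of_mem _ _ _ hxT, hgI _ hxT _ (by simpa using hx), zero_mul]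

end Sections

theorem stdMon_recursion_sections_general {n : ℕ} {F : Type*} [Field F]
    (V : Finset (Fin (n + 1) → F))
    (lin : LinearOrder (Mon (n + 1))) (hlin : IsLexOrder (Equiv.refl (Fin (n + 1))) lin)
    (lin' : LinearOrder (Mon n)) (hlin' : IsLexOrder (Equiv.refl (Fin n)) lin')
    (w : Mon (n + 1)) :
    w ∈ stdMon lin (vanishIdeal (V : Set (Fin (n + 1) → F))) ↔
      ∃ A : Finset F, w (Fin.last n) + 1 ≤ A.card ∧
        ∀ α ∈ A, restrictMon w ∈
          stdMon lin' (vanishIdeal {v : Fin n → F | Fin.snoc v α ∈ V}) := by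
  constructor
  · intro hw
    by_contra hA
    refine notMem_stdMon_of_few_sections V hlin hlin' w (fun A hstd => ?_) hw
    by_contra hcard
    exact hA ⟨A, by omega, hstd⟩
  · rintro ⟨A, hA, hstd⟩
    exact mem_stdMon_of_many_sections V hlin hlin' w A hA hstd

/-- Felszeghy–Ráth–Rónyai recursion.
Over `n + 1 ≥ 2` variables with the standard lex order (`x_0 ≻ ⋯ ≻ x_n`), a monomial
`x^w` is a standard monomial of `I(𝒱)` if and only if there are at least `w_n + 1`
elements `α ∈ 𝔽` for which `x_0^{w_0}⋯x_{n-1}^{w_{n-1}}` is a standard monomial of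
`I(𝒱_α)`, where `𝒱_α = {v : (v,α) ∈ 𝒱}`. -/
theorem stdMon_recursion_sections {n : ℕ} (hn : 0 < n) {F : Type*} [Field F]
    (V : Finset (Fin (n + 1) → F))
    (lin : LinearOrder (Mon (n + 1))) (hlin : IsLexOrder (Equiv.refl (Fin (n + 1))) lin)
    (lin' : LinearOrder (Mon n)) (hlin' : IsLexOrder (Equiv.refl (Fin n)) lin')
    (w : Mon (n + 1)) :
    w ∈ stdMon lin (vanishIdeal (V : Set (Fin (n + 1) → F))) ↔
      ∃ A : Finset F, w (Fin.last n) + 1 ≤ A.card ∧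
        ∀ α ∈ A, restrictMon w ∈
          stdMon lin' (vanishIdeal {v : Fin n → F | Fin.snoc v α ∈ V}) :=
  stdMon_recursion_sections_general V lin hlin lin' hlin' w
end

section
/- If a finite point set 𝒱 ⊆ {0,1,…,k−1}^n is a down-set, then D_i(𝒱) = 𝒱 for every i ∈ [n]; consequently every finite down-set 𝒱 ⊆ {0,1,…,k−1}^n is extremal. -/
/-!
For a down-set `V`, the standard monomials of `I(V)` are exactly the exponent vectors of the
points of `V`, for every linear order of monomials refining divisibility, hence for every lex
order. If `m` is not a point of `V`, the falling factorial `∏ᵢ xᵢ (xᵢ - 1) ⋯ (xᵢ - mᵢ + 1)`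
vanishes on `V` (a point `u ≥ m` of `V` would put `m` in `V`) and has leading monomial `x^m`.
Conversely, expand `f ∈ I(V)` in the falling factorials, which are unitriangular with respect to
divisibility: evaluating at the points of `V` from the bottom up kills the coefficients indexed
by points of `V`, while the leading monomial of `f` is the largest index with a nonzero
coefficient. The downshift statement holds because every section of a down-set is an initial
segment of `{0, …, k-1}`.
-/

open MvPolynomial

open Finset

section DegDominated

variable {σ R : Type*}

/-- `IsDegDominated` with the dominating exponent made explicit. -/
def IsDegDominatedBy [CommSemiring R] (f : MvPolynomial σ R) (w : σ →₀ ℕ) : Prop :=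
  coeff w f = 1 ∧ ∀ v ∈ f.support, v ≤ w

theorem IsDegDominatedBy.mul [CommSemiring R] {f g : MvPolynomial σ R} {a b : σ →₀ ℕ}
    (hf : IsDegDominatedBy f a) (hg : IsDegDominatedBy g b) :
    IsDegDominatedBy (f * g) (a + b) := by
  classical
  refine ⟨?_, fun v hv => ?_⟩
  · rw [coeff_mul, sum_eq_single (a, b), hf.1, hg.1, one_mul]
    · rintro ⟨x, y⟩ hxy hne
      simp only [HasAntidiagonal.mem_antidiagonal] at hxy
      by_contra hxy0
      have hxa := hf.2 x (mem_support_iff.2 (left_ne_zero_of_mul hxy0))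
      have hyb := hg.2 y (mem_support_iff.2 (right_ne_zero_of_mul hxy0))
      have hax : a ≤ x := le_of_add_le_add_right <|
        calc a + b = x + y := hxy.symm
          _ ≤ x + b := add_le_add le_rfl hyb
      obtain rfl := le_antisymm hxa hax
      exact hne (by rw [add_left_cancel hxy])
    · simp
  · obtain ⟨x, hx, y, hy, rfl⟩ := mem_add.1 (support_mul f g hv)
    exact add_le_add (hf.2 x hx) (hg.2 y hy)

theorem IsDegDominatedBy.prod [CommSemiring R] {ι : Type*} {s : Finset ι}
    {f : ι → MvPolynomial σ R} {w : ι → σ →₀ ℕ} (h : ∀ i ∈ s, IsDegDominatedBy (f i) (w i)) :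
    IsDegDominatedBy (∏ i ∈ s, f i) (∑ i ∈ s, w i) := by
  classical
  induction s using Finset.induction_on with
  | empty => simp [IsDegDominatedBy, coeff_one]
  | insert i s hi ih =>
    rw [prod_insert hi, sum_insert hi]
    exact (h i (mem_insert_self i s)).mul (ih fun j hj => h j (mem_insert_of_mem hj))

theorem isDegDominatedBy_X_sub_C [CommRing R] (i : σ) (c : R) :
    IsDegDominatedBy (X i - C c : MvPolynomial σ R) (Finsupp.single i 1) := by
  classical
  refine ⟨by simp [coeff_X, coeff_C, eq_comm], fun v hv => ?_⟩
  rw [mem_support_iff, coeff_sub, coeff_X, coeff_C] at hv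
  by_cases h1 : Finsupp.single i 1 = v
  · exact h1.ge
  by_cases h0 : 0 = v
  · exact h0 ▸ zero_le
  simp [h1, h0] at hv

noncomputable def fallingFactorial (R : Type*) [CommRing R] [Fintype σ] (m : σ →₀ ℕ) :
    MvPolynomial σ R :=
  ∏ i, ∏ j ∈ range (m i), (X i - C (j : R))

theorem isDegDominatedBy_fallingFactorial [CommRing R] [Fintype σ] (m : σ →₀ ℕ) :
    IsDegDominatedBy (fallingFactorial R m) m := by
  have h := IsDegDominatedBy.prod (s := univ) (w := fun i => Finsupp.single i (m i))
    fun i _ => by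
      simpa using IsDegDominatedBy.prod (s := range (m i)) fun j _ =>
        isDegDominatedBy_X_sub_C i (j : R)
  rwa [Finsupp.univ_sum_single] at h

theorem exists_eq_sum_of_isDegDominatedBy [CommRing R] {P : (σ →₀ ℕ) → MvPolynomial σ R}
    (hP : ∀ e, IsDegDominatedBy (P e) e) {S : Finset (σ →₀ ℕ)}
    (hS : IsLowerSet (S : Set (σ →₀ ℕ))) {f : MvPolynomial σ R} (hf : f.support ⊆ S) :
    ∃ d : (σ →₀ ℕ) → R, f = ∑ e ∈ S, C (d e) * P e := by
  classical
  induction S using Finset.strongInduction generalizing f with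
  | H S ih =>
  obtain rfl | hne := S.eq_empty_or_nonempty
  · exact ⟨0, by simpa using hf⟩
  obtain ⟨μ, hμ, hμmax⟩ := S.exists_maximal hne
  have hS' : IsLowerSet (S.erase μ : Set (σ →₀ ℕ)) := fun a b hba ha => by
    obtain ⟨haμ, haS⟩ := mem_erase.1 ha
    refine mem_erase.2 ⟨?_, hS hba haS⟩
    rintro rfl
    exact haμ (le_antisymm (hμmax haS hba) hba)
  set g := f - C (coeff μ f) * P μ
  have hg : g.support ⊆ S.erase μ := fun e he => by
    rw [mem_support_iff, coeff_sub, coeff_C_mul] at he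
    refine mem_erase.2 ⟨?_, ?_⟩
    · rintro rfl
      simp [(hP e).1] at he
    · by_cases hfe : coeff e f = 0
      · rw [hfe, zero_sub, neg_ne_zero] at he
        exact hS ((hP μ).2 e (mem_support_iff.2 (right_ne_zero_of_mul he))) hμ
      · exact hf (mem_support_iff.2 hfe)
  obtain ⟨d, hd⟩ := ih (S.erase μ) (erase_ssubset hμ) hS' hg
  refine ⟨Function.update d μ (coeff μ f), ?_⟩
  rw [← add_sum_erase S _ hμ, Function.update_self,
    sum_congr rfl fun e he => by rw [Function.update_of_ne (ne_of_mem_erase he)], ← hd]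
  ring

end DegDominated

theorem IsLeadMon.unique {n : ℕ} {R : Type*} [CommSemiring R] {lin : LinearOrder (Mon n)}
    {f : MvPolynomial (Fin n) R} {a b : Mon n} (ha : IsLeadMon lin f a)
    (hb : IsLeadMon lin f b) : a = b :=
  lin.le_antisymm _ _ (hb.2 a ha.1) (ha.2 b hb.1)

section LeadMon

variable {n : ℕ} {R : Type*} [CommSemiring R] {lin : LinearOrder (Mon n)}
  (hlin : ∀ u v : Mon n, u ≤ v → lin.le u v)
include hlin

theorem IsDegDominatedBy.isLeadMon [Nontrivial R] {f : MvPolynomial (Fin n) R} {w : Mon n}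
    (hf : IsDegDominatedBy f w) : IsLeadMon lin f w :=
  ⟨mem_support_iff.2 (hf.1 ▸ one_ne_zero), fun v hv => hlin v w (hf.2 v hv)⟩

theorem exists_isLeadMon_sum_of_isDegDominatedBy {P : Mon n → MvPolynomial (Fin n) R}
    (hP : ∀ e, IsDegDominatedBy (P e) e) {S : Finset (Mon n)} {d : Mon n → R}
    (h : ∑ e ∈ S, C (d e) * P e ≠ 0) :
    ∃ μ ∈ S, d μ ≠ 0 ∧ IsLeadMon lin (∑ e ∈ S, C (d e) * P e) μ := by
  classical
  have hne : (S.filter fun e => d e ≠ 0).Nonempty := by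
    contrapose! h
    exact sum_eq_zero fun e he => by
      simp [show d e = 0 by simpa using filter_eq_empty_iff.1 h he]
  obtain ⟨μ, hμ, hμmax⟩ := @exists_max_image _ _ lin _ id hne
  obtain ⟨hμS, hdμ⟩ := mem_filter.1 hμ
  have hmax : ∀ e ∈ S, d e ≠ 0 → lin.le e μ := fun e he hde => hμmax e (mem_filter.2 ⟨he, hde⟩)
  have hcoeff (v : Mon n) : coeff v (∑ e ∈ S, C (d e) * P e) = ∑ e ∈ S, d e * coeff v (P e) := by
    simp only [coeff_sum, coeff_C_mul]
  refine ⟨μ, hμS, hdμ, ?_, fun v hv => ?_⟩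
  · rw [mem_support_iff, hcoeff, sum_eq_single_of_mem μ hμS, (hP μ).1, mul_one]
    · exact hdμ
    · intro e he heμ
      by_contra hne
      have hμe := hlin μ e ((hP e).2 μ (mem_support_iff.2 (right_ne_zero_of_mul hne)))
      exact heμ (lin.le_antisymm _ _ (hmax e he (left_ne_zero_of_mul hne)) hμe)
  · rw [mem_support_iff, hcoeff] at hv
    obtain ⟨e, he, hne⟩ := exists_ne_zero_of_sum_ne_zero hv
    have hve := hlin v e ((hP e).2 v (mem_support_iff.2 (right_ne_zero_of_mul hne)))
    exact lin.le_trans _ _ _ hve (hmax e he (left_ne_zero_of_mul hne))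

end LeadMon

section Points

variable {n k : ℕ}

theorem exists_toExp_eq_of_le {e : Mon n} {u : Fin n → Fin k} (h : e ≤ toExp u) :
    ∃ w ≤ u, toExp w = e :=
  ⟨fun i => ⟨e i, (h i).trans_lt (u i).isLt⟩, fun i => Fin.mk_le_of_le_val (h i),
    Finsupp.ext fun _ => rfl⟩

variable {F : Type*} [Field F]

theorem eval_toField_fallingFactorial (m : Mon n) (u : Fin n → Fin k) :
    eval (toField F u) (fallingFactorial F m) = ∏ i, ∏ j ∈ range (m i), ((u i : ℕ) - j : F) := by
  simp [fallingFactorial, toField]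

theorem eval_toField_fallingFactorial_eq_zero {m : Mon n} {u : Fin n → Fin k}
    (h : ¬ m ≤ toExp u) : eval (toField F u) (fallingFactorial F m) = 0 := by
  obtain ⟨i, hi⟩ := not_forall.1 h
  rw [eval_toField_fallingFactorial]
  exact prod_eq_zero (mem_univ i) (prod_eq_zero (mem_range.2 (not_le.1 hi)) (sub_self _))

theorem eval_toField_fallingFactorial_ne_zero [CharZero F] {m : Mon n} {u : Fin n → Fin k}
    (h : m ≤ toExp u) : eval (toField F u) (fallingFactorial F m) ≠ 0 := by
  rw [eval_toField_fallingFactorial]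
  refine prod_ne_zero_iff.2 fun i _ => prod_ne_zero_iff.2 fun j hj => sub_ne_zero.2 ?_
  exact_mod_cast ((mem_range.1 hj).trans_le (h i)).ne'

theorem fallingFactorial_mem_vanishIdeal [DecidableEq F] {V : Finset (Fin n → Fin k)}
    (hV : IsLowerSet (V : Set (Fin n → Fin k))) {m : Mon n} (hm : m ∉ V.image toExp) :
    fallingFactorial F m ∈ vanishIdeal ((V.image (toField F) : Finset _) : Set (Fin n → F)) := by
  rintro _ hv
  obtain ⟨u, hu, rfl⟩ := by simpa using hv
  refine eval_toField_fallingFactorial_eq_zero fun hmu => hm ?_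
  obtain ⟨w, hwu, rfl⟩ := exists_toExp_eq_of_le hmu
  exact mem_image_of_mem _ (hV hwu hu)

end Points

section StdMon

variable {n k : ℕ} {F : Type*} [Field F] [DecidableEq F] [CharZero F]
  {V : Finset (Fin n → Fin k)} (hV : IsLowerSet (V : Set (Fin n → Fin k)))
include hV

/-- Evaluating at the points of `V` in increasing order peels off the coefficients one at a
time: at `u` only `e ≤ toExp u` contribute, and all `e < toExp u` are exponents of points of
`V` below `u`. -/
theorem coeff_eq_zero_of_sum_fallingFactorial_mem_vanishIdeal {S : Finset (Mon n)}
    {d : Mon n → F}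
    (hf : ∑ e ∈ S, C (d e) * fallingFactorial F e ∈
      vanishIdeal ((V.image (toField F) : Finset _) : Set (Fin n → F)))
    (w : Fin n → Fin k) (hw : w ∈ V) (hwS : toExp w ∈ S) : d (toExp w) = 0 := by
  induction w using WellFoundedLT.induction with
  | _ u ih =>
  have h0 := hf _ (mem_coe.2 (mem_image_of_mem _ hw))
  rw [map_sum, sum_eq_single_of_mem _ hwS] at h0
  · simpa [eval_toField_fallingFactorial_ne_zero le_rfl] using h0
  · intro e he hne
    by_cases hle : e ≤ toExp u
    · obtain ⟨w, hwu, rfl⟩ := exists_toExp_eq_of_le hle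
      have hwu' : w < u := lt_of_le_of_ne hwu (by rintro rfl; exact hne rfl)
      simp [ih w hwu' (hV hwu hw) he]
    · simp [eval_toField_fallingFactorial_eq_zero hle]

theorem stdMon_vanishIdeal_image_toField {lin : LinearOrder (Mon n)}
    (hlin : ∀ u v : Mon n, u ≤ v → lin.le u v) :
    stdMon lin (vanishIdeal ((V.image (toField F) : Finset _) : Set (Fin n → F))) =
      V.image toExp := by
  ext m
  constructor
  · intro hstd
    by_contra hm
    have hdom := isDegDominatedBy_fallingFactorial (R := F) m
    refine hstd ⟨fallingFactorial F m, fallingFactorial_mem_vanishIdeal hV hm, ?_,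
      hdom.isLeadMon hlin⟩
    rintro h
    simpa [h] using hdom.1
  · rintro hm ⟨f, hf, hf0, hlead⟩
    obtain ⟨w, hw, rfl⟩ := mem_image.1 (mem_coe.1 hm)
    obtain ⟨d, hd⟩ := exists_eq_sum_of_isDegDominatedBy isDegDominatedBy_fallingFactorial
      (S := Iic (f.support.sup id)) (by rw [coe_Iic]; exact isLowerSet_Iic _)
      fun e he => mem_Iic.2 (le_sup (f := id) he)
    rw [hd] at hf hf0 hlead
    obtain ⟨μ, hμS, hdμ, hμlead⟩ :=
      exists_isLeadMon_sum_of_isDegDominatedBy hlin isDegDominatedBy_fallingFactorial hf0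
    obtain rfl := hlead.unique hμlead
    exact hdμ (coeff_eq_zero_of_sum_fallingFactorial_mem_vanishIdeal hV hf w hw hμS)

end StdMon

theorem Fin.mem_iff_lt_card_of_isLowerSet {k : ℕ} {s : Finset (Fin k)}
    (hs : IsLowerSet (s : Set (Fin k))) (a : Fin k) : a ∈ s ↔ (a : ℕ) < #s := by
  constructor
  · intro ha
    have := card_le_card fun b hb => hs (mem_Iic.1 hb) ha
    rwa [Fin.card_Iic, Nat.add_one_le_iff] at this
  · intro ha
    by_contra has
    have := card_le_card fun b hb => mem_Iio.2 (lt_of_not_ge fun hab => has (hs hab hb))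
    rw [Fin.card_Iio] at this
    omega

theorem downshift_eq_self {n k : ℕ} {V : Finset (Fin n → Fin k)}
    (hV : IsLowerSet (V : Set (Fin n → Fin k))) (i : Fin n) : downshift V i = V := by
  ext w
  have hsec : IsLowerSet ((univ.filter fun α => Function.update w i α ∈ V : Finset (Fin k)) :
      Set (Fin k)) := fun a b hba ha => by
    simp only [coe_filter, mem_univ, true_and, Set.mem_ofPred_eq] at ha ⊢
    exact hV (update_le_update_iff'.2 hba) ha
  simp [downshift, ← Fin.mem_iff_lt_card_of_isLowerSet hsec]

theorem IsLexOrder.le_of_le {n : ℕ} {σ : Equiv.Perm (Fin n)} {lin : LinearOrder (Mon n)}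
    (h : IsLexOrder σ lin) {u v : Mon n} (huv : u ≤ v) : lin.le u v := by
  obtain rfl | hne := eq_or_ne u v
  · exact lin.le_refl u
  obtain ⟨i, hi⟩ := DFunLike.ne_iff.1 hne
  have hlt : (fun j => u (σ j)) < fun j => v (σ j) :=
    Pi.lt_def.2 ⟨fun j => huv (σ j), σ.symm i, by simpa using (huv i).lt_of_ne hi⟩
  obtain ⟨j, hj, hltj⟩ := Pi.lex_lt_of_lt wellFounded_lt hlt
  exact @le_of_lt _ lin.toPreorder _ _ ((h u v).2 ⟨j, hltj, hj⟩)

/-- If a finite point set `𝒱 ⊆ {0,…,k-1}^n` is a down-set then `Dᵢ(𝒱) = 𝒱` for every `i`;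
consequently every finite down-set is extremal. -/
theorem downSet_downshift_fixed_and_extremal {n k : ℕ} (V : Finset (Fin n → Fin k))
    (hdown : ∀ v ∈ V, ∀ w : Fin n → Fin k, (∀ i : Fin n, w i ≤ v i) → w ∈ V) :
    (∀ i : Fin n, downshift V i = V) ∧
    IsExtremal ((V.image (toField ℚ) : Finset (Fin n → ℚ)) : Set (Fin n → ℚ)) := by
  have hV : IsLowerSet (V : Set (Fin n → Fin k)) := fun v w hwv hv => hdown v hv w hwv
  refine ⟨downshift_eq_self hV, fun σ₁ σ₂ lin₁ lin₂ h₁ h₂ => ?_⟩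
  rw [stdMon_vanishIdeal_image_toField hV fun _ _ => h₁.le_of_le,
    stdMon_vanishIdeal_image_toField hV fun _ _ => h₂.le_of_le]
end

section
/- Let 𝔽 and 𝔽̂ be fields, A ⊆ 𝔽 a finite set, 𝒱 ⊆ A^n a finite point set, and φ_1,…,φ_n : A → 𝔽̂ injective functions. Let 𝒱̂ = {(φ_1(v_1),…,φ_n(v_n)) : (v_1,…,v_n) ∈ 𝒱}. Then for any ordering of the variables, the standard monomials of I(𝒱) ⊴ 𝔽[x_1,…,x_n] with respect to the induced lexicographic order coincide with the standard monomials of I(𝒱̂) ⊴ 𝔽̂[x_1,…,x_n] with respect to the same lexicographic order. -/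
open MvPolynomial

/-!
Renumber the variables so that `x₀` is the most significant one. For `j : ℕ` let `Vⱼ` be the
set of tails `t ∈ 𝔽^{n-1}` over which `V` has more than `j` points. If `f ∈ I(V)` had lex leading
monomial `x₀ʲ u`, then `f` has degree `≤ j` in `x₀`, so for `t ∈ Vⱼ` the univariate polynomial
`f(·, t)` has more than `j` roots and vanishes; hence the coefficient of `x₀ʲ` lies in `I(Vⱼ)`
and has leading monomial `u`. So `x₀ʲ u` is standard for `I(V)` whenever `u` is standard for
`I(Vⱼ)`. The monomials obtained recursively this way are exactly `|V|` many, while at most `|V|`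
monomials are standard, because no nonzero polynomial supported on standard monomials vanishes
on `V`. Thus the standard monomials are given by a recursion that only sees the sizes of the
fibres of the projections, and these are preserved by coordinatewise injections.
-/
section LexStandardMonomials

variable {n : ℕ} {R : Type*}

theorem mem_vanishIdeal [CommRing R] {V : Set (Fin n → R)} {f : MvPolynomial (Fin n) R} :
    f ∈ vanishIdeal V ↔ ∀ v ∈ V, eval v f = 0 :=
  Iff.rfl

def IsLexLeadMon [CommSemiring R] (σ : Equiv.Perm (Fin n)) (f : MvPolynomial (Fin n) R)
    (m : Mon n) : Prop :=
  m ∈ f.support ∧ ∀ m' ∈ f.support, m' = m ∨ lexLt σ m' m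

def lexStdMon [CommSemiring R] (σ : Equiv.Perm (Fin n)) (I : Ideal (MvPolynomial (Fin n) R)) :
    Set (Mon n) :=
  { m | ¬ ∃ f ∈ I, f ≠ 0 ∧ IsLexLeadMon σ f m }

theorem IsLexOrder.le_iff {σ : Equiv.Perm (Fin n)} {lin : LinearOrder (Mon n)}
    (hlin : IsLexOrder σ lin) (u v : Mon n) : lin.le u v ↔ u = v ∨ lexLt σ u v := by
  rw [← hlin u v]
  exact @le_iff_eq_or_lt _ lin.toPartialOrder u v

theorem stdMon_eq_lexStdMon [CommSemiring R] {σ : Equiv.Perm (Fin n)}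
    {lin : LinearOrder (Mon n)} (hlin : IsLexOrder σ lin) (I : Ideal (MvPolynomial (Fin n) R)) :
    stdMon lin I = lexStdMon σ I := by
  simp only [stdMon, lexStdMon, IsLeadMon, IsLexLeadMon, hlin.le_iff]

theorem lexLt_one_iff_toLex_lt {u v : Mon n} : lexLt 1 u v ↔ toLex u < toLex v := by
  rw [Finsupp.Lex.lt_iff]
  simp only [lexLt, Equiv.Perm.coe_one, id_eq, and_comm]
  rfl

theorem exists_isLexLeadMon_one [CommSemiring R] {f : MvPolynomial (Fin n) R} (hf : f ≠ 0) :
    ∃ m, IsLexLeadMon 1 f m := by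
  obtain ⟨m, hm, hmax⟩ := f.support.exists_max_image toLex (support_nonempty.mpr hf)
  refine ⟨m, hm, fun m' hm' => ?_⟩
  rw [lexLt_one_iff_toLex_lt, ← toLex_inj]
  exact eq_or_lt_of_le (hmax m' hm')

end LexStandardMonomials

section Counting

open Finset
variable {n : ℕ} {F : Type*} [Field F]

theorem card_le_card_of_forall_vanishing_eq_zero (V : Finset (Fin n → F)) (s : Finset (Mon n))
    (hs : ∀ f ∈ restrictSupport F (s : Set (Mon n)),
      f ∈ vanishIdeal (V : Set (Fin n → F)) → f = 0) :
    #s ≤ #V := by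
  let ev : restrictSupport F (s : Set (Mon n)) →ₗ[F] V → F :=
    (LinearMap.pi fun v : V => (aeval (R := F) v.1).toLinearMap).domRestrict _
  have hev : Function.Injective ev := by
    rw [← LinearMap.ker_eq_bot, Submodule.eq_bot_iff]
    rintro ⟨f, hfs⟩ hf
    ext1
    exact hs f hfs fun v hv => congrFun hf ⟨v, hv⟩
  simpa [Module.finrank_eq_card_basis (basisRestrictSupport F (s : Set (Mon n)))] using
    LinearMap.finrank_le_finrank_of_injective hev

theorem card_le_of_subset_lexStdMon (V : Finset (Fin n → F)) (s : Finset (Mon n))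
    (hs : ↑s ⊆ lexStdMon 1 (vanishIdeal (V : Set (Fin n → F)))) : #s ≤ #V := by
  refine card_le_card_of_forall_vanishing_eq_zero V s fun f hfs hfV => ?_
  by_contra hf0
  obtain ⟨m, hm⟩ := exists_isLexLeadMon_one hf0
  exact hs (hfs hm.1) ⟨f, hfV, hf0, hm⟩

end Counting

section Permutation

open Finsupp
variable {n : ℕ} {R : Type*}

theorem lexLt_equivMapDomain_iff (σ : Equiv.Perm (Fin n)) (u v : Mon n) :
    lexLt 1 (equivMapDomain σ.symm u) (equivMapDomain σ.symm v) ↔ lexLt σ u v := by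
  simp [lexLt]

theorem coeff_rename_equivMapDomain [CommSemiring R] (σ : Equiv.Perm (Fin n))
    (f : MvPolynomial (Fin n) R) (m : Mon n) :
    (rename σ f).coeff (equivMapDomain σ m) = f.coeff m := by
  rw [equivMapDomain_eq_mapDomain, coeff_rename_mapDomain _ σ.injective]

theorem isLexLeadMon_rename_iff [CommSemiring R] (σ : Equiv.Perm (Fin n))
    (f : MvPolynomial (Fin n) R) (m : Mon n) :
    IsLexLeadMon 1 (rename σ.symm f) (equivMapDomain σ.symm m) ↔ IsLexLeadMon σ f m := by
  have hsupp : ∀ u, equivMapDomain σ.symm u ∈ (rename σ.symm f).support ↔ u ∈ f.support :=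
    fun u => by simp only [MvPolynomial.mem_support_iff, coeff_rename_equivMapDomain]
  have hinj : ∀ u, equivMapDomain σ.symm u = equivMapDomain σ.symm m ↔ u = m :=
    fun u => (equivCongrLeft σ.symm).apply_eq_iff_eq
  unfold IsLexLeadMon
  rw [hsupp, ← (equivCongrLeft σ.symm).forall_congr_right]
  simp only [equivCongrLeft_apply, hsupp, hinj, lexLt_equivMapDomain_iff]

theorem rename_mem_vanishIdeal_image_iff [CommRing R] (σ : Equiv.Perm (Fin n))
    (V : Set (Fin n → R)) (f : MvPolynomial (Fin n) R) :
    rename σ.symm f ∈ vanishIdeal ((· ∘ σ) '' V) ↔ f ∈ vanishIdeal V := by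
  have heval : ∀ v : Fin n → R, eval (v ∘ σ) (rename σ.symm f) = eval v f := fun v => by
    rw [eval_rename, Function.comp_assoc, Equiv.self_comp_symm, Function.comp_id]
  simp only [mem_vanishIdeal, Set.forall_mem_image, heval]

theorem lexStdMon_vanishIdeal [CommRing R] (σ : Equiv.Perm (Fin n)) (V : Set (Fin n → R)) :
    lexStdMon σ (vanishIdeal V) =
      equivMapDomain σ.symm ⁻¹' lexStdMon 1 (vanishIdeal ((· ∘ σ) '' V)) := by
  ext m
  simp only [lexStdMon, Set.mem_preimage, Set.mem_ofPred_eq]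
  refine not_congr ((renameEquiv R σ.symm).toEquiv.exists_congr fun f => ?_)
  simp only [AlgEquiv.toEquiv_eq_coe, EquivLike.coe_coe, renameEquiv_apply,
    rename_mem_vanishIdeal_image_iff, ne_eq,
    map_eq_zero_iff _ (rename_injective _ σ.symm.injective),
    isLexLeadMon_rename_iff]

end Permutation

section Staircase

open Finset
open scoped Classical
variable {n : ℕ} {α : Type*}

noncomputable def tailFiberCard (V : Finset (Fin (n + 1) → α)) (t : Fin n → α) : ℕ :=
  #{v ∈ V | Fin.tail v = t}

noncomputable def tailsWithFiberCardGt (V : Finset (Fin (n + 1) → α)) (j : ℕ) :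
    Finset (Fin n → α) :=
  {t ∈ V.image Fin.tail | j < tailFiberCard V t}

noncomputable def lexStaircase : {n : ℕ} → Finset (Fin n → α) → Finset (Mon n)
  | 0, V => V.image fun _ => 0
  | _ + 1, V =>
    (range #V).biUnion fun j => (lexStaircase (tailsWithFiberCardGt V j)).image (Finsupp.cons j)

theorem sum_card_tailsWithFiberCardGt (V : Finset (Fin (n + 1) → α)) :
    ∑ j ∈ range #V, #(tailsWithFiberCardGt V j) = #V := by
  have hcount : ∀ t, #{j ∈ range #V | j < tailFiberCard V t} = tailFiberCard V t := fun t => by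
    rw [show {j ∈ range #V | j < tailFiberCard V t} = range (tailFiberCard V t) by
      ext j
      simp only [mem_filter, mem_range]
      have : tailFiberCard V t ≤ #V := card_filter_le _ _
      omega, card_range]
  simp only [tailsWithFiberCardGt, card_filter]
  rw [sum_comm]
  simp only [← card_filter, hcount]
  exact (card_eq_sum_card_image _ _).symm

theorem card_lexStaircase : ∀ {n : ℕ} (V : Finset (Fin n → α)), #(lexStaircase V) = #V
  | 0, V => card_image_of_injective _ fun _ _ _ => Subsingleton.elim _ _
  | n + 1, V => by
    rw [lexStaircase, card_biUnion]
    · simp only [card_image_of_injective _ (Finsupp.cons_right_injective _), card_lexStaircase]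
      exact sum_card_tailsWithFiberCardGt V
    · intro j _ j' _ hjj'
      simp only [Function.onFun, disjoint_left, mem_image]
      rintro _ ⟨u, -, rfl⟩ ⟨u', -, h⟩
      exact hjj' (Finsupp.cons_injective2 h).1.symm

end Staircase

section Invariance

open Finset
open scoped Classical
variable {n : ℕ} {α β : Type*} {A : Set α}

theorem injOn_piMap {φ : Fin n → α → β} (hφ : ∀ i, Set.InjOn (φ i) A) :
    Set.InjOn (Pi.map φ) (Set.univ.pi fun _ => A) := fun _ hv _ hw h =>
  funext fun i => hφ i (hv i trivial) (hw i trivial) (congrFun h i)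

theorem tail_mem_pi {v : Fin (n + 1) → α} (hv : v ∈ Set.univ.pi fun _ => A) :
    Fin.tail v ∈ Set.univ.pi fun _ => A :=
  fun i _ => hv i.succ trivial

theorem tailFiberCard_image_piMap {φ : Fin (n + 1) → α → β} (hφ : ∀ i, Set.InjOn (φ i) A)
    {V : Finset (Fin (n + 1) → α)} (hV : (V : Set (Fin (n + 1) → α)) ⊆ Set.univ.pi fun _ => A)
    {t : Fin n → α} (ht : t ∈ Set.univ.pi fun _ => A) :
    tailFiberCard (V.image (Pi.map φ)) (Pi.map (fun i => φ i.succ) t) = tailFiberCard V t := by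
  rw [tailFiberCard, filter_image,
    card_image_of_injOn ((injOn_piMap hφ).mono ((coe_subset.mpr (filter_subset _ V)).trans hV))]
  congr 1
  refine filter_congr fun v hv => ?_
  exact (injOn_piMap fun i => hφ i.succ).eq_iff (tail_mem_pi (hV hv)) ht

theorem tailsWithFiberCardGt_image_piMap {φ : Fin (n + 1) → α → β}
    (hφ : ∀ i, Set.InjOn (φ i) A) {V : Finset (Fin (n + 1) → α)}
    (hV : (V : Set (Fin (n + 1) → α)) ⊆ Set.univ.pi fun _ => A) (j : ℕ) :
    tailsWithFiberCardGt (V.image (Pi.map φ)) j =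
      (tailsWithFiberCardGt V j).image (Pi.map fun i => φ i.succ) := by
  rw [tailsWithFiberCardGt, tailsWithFiberCardGt, image_image,
    show Fin.tail ∘ Pi.map φ = Pi.map (fun i => φ i.succ) ∘ Fin.tail from rfl, ← image_image,
    filter_image]
  refine congrArg _ (filter_congr fun t ht => ?_)
  obtain ⟨v, hv, rfl⟩ := mem_image.mp ht
  rw [tailFiberCard_image_piMap hφ hV (tail_mem_pi (hV hv))]

theorem tailsWithFiberCardGt_subset_pi {V : Finset (Fin (n + 1) → α)}
    (hV : (V : Set (Fin (n + 1) → α)) ⊆ Set.univ.pi fun _ => A) (j : ℕ) :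
    (tailsWithFiberCardGt V j : Set (Fin n → α)) ⊆ Set.univ.pi fun _ => A := by
  intro t ht
  obtain ⟨v, hv, rfl⟩ := mem_image.mp (mem_filter.mp ht).1
  exact tail_mem_pi (hV hv)

theorem lexStaircase_image_piMap :
    ∀ {n : ℕ} {φ : Fin n → α → β}, (∀ i, Set.InjOn (φ i) A) →
      ∀ {V : Finset (Fin n → α)}, (V : Set (Fin n → α)) ⊆ (Set.univ.pi fun _ => A) →
        lexStaircase (V.image (Pi.map φ)) = lexStaircase V
  | 0, φ, _, V, _ => by simp only [lexStaircase, image_image]; rfl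
  | n + 1, φ, hφ, V, hV => by
    rw [lexStaircase, lexStaircase, card_image_of_injOn ((injOn_piMap hφ).mono hV)]
    refine biUnion_congr rfl fun j _ => ?_
    rw [tailsWithFiberCardGt_image_piMap hφ hV,
      lexStaircase_image_piMap (fun i => hφ i.succ) (tailsWithFiberCardGt_subset_pi hV j)]

end Invariance

section LexStdMonOfVanishIdeal

open Finset
open scoped Classical
variable {n : ℕ} {R F : Type*}

theorem lexLt_one_cons_iff {a b : ℕ} {u v : Mon n} :
    lexLt 1 (u.cons a) (v.cons b) ↔ a < b ∨ a = b ∧ lexLt 1 u v := by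
  simp only [lexLt, Equiv.Perm.coe_one, id_eq, Fin.exists_fin_succ, Fin.forall_fin_succ,
    Finsupp.cons_zero, Finsupp.cons_succ, Fin.not_lt_zero, Fin.succ_lt_succ_iff,
    Fin.succ_pos, forall_const, IsEmpty.forall_iff, implies_true, and_true]
  exact or_congr Iff.rfl
    ⟨fun ⟨i, hlt, heq, hpre⟩ => ⟨heq, i, hlt, hpre⟩, fun ⟨heq, i, hlt, hpre⟩ => ⟨i, hlt, heq, hpre⟩⟩

theorem IsLexLeadMon.natDegree_finSuccEquiv_le [CommSemiring R]
    {f : MvPolynomial (Fin (n + 1)) R} {j : ℕ} {u : Mon n} (h : IsLexLeadMon 1 f (u.cons j)) :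
    (finSuccEquiv R n f).natDegree ≤ j := by
  rw [Polynomial.natDegree_le_iff_coeff_eq_zero]
  intro d hd
  by_contra hcoeff
  obtain ⟨m, hm⟩ := MvPolynomial.ne_zero_iff.mp hcoeff
  rw [finSuccEquiv_coeff_coeff] at hm
  rcases h.2 _ (mem_support_iff.mpr hm) with heq | hlt
  · have := (Finsupp.cons_injective2 heq).1
    omega
  · rcases lexLt_one_cons_iff.mp hlt with hlt | ⟨rfl, -⟩ <;> omega

theorem IsLexLeadMon.coeff_finSuccEquiv [CommSemiring R]
    {f : MvPolynomial (Fin (n + 1)) R} {j : ℕ} {u : Mon n} (h : IsLexLeadMon 1 f (u.cons j)) :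
    IsLexLeadMon 1 ((finSuccEquiv R n f).coeff j) u := by
  have hsupp : ∀ m, m ∈ ((finSuccEquiv R n f).coeff j).support ↔ m.cons j ∈ f.support :=
    fun m => by rw [mem_support_iff, mem_support_iff, finSuccEquiv_coeff_coeff]
  refine ⟨(hsupp u).mpr h.1, fun m hm => ?_⟩
  rcases h.2 _ ((hsupp m).mp hm) with heq | hlt
  · exact Or.inl (Finsupp.cons_right_injective j heq)
  · rcases lexLt_one_cons_iff.mp hlt with hlt | ⟨-, hlt⟩
    · exact absurd hlt (lt_irrefl j)
    · exact Or.inr hlt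

theorem coeff_finSuccEquiv_mem_vanishIdeal [Field F] {V : Finset (Fin (n + 1) → F)}
    {f : MvPolynomial (Fin (n + 1)) F} (hf : f ∈ vanishIdeal (V : Set (Fin (n + 1) → F)))
    {j : ℕ} (hdeg : (finSuccEquiv F n f).natDegree ≤ j) :
    (finSuccEquiv F n f).coeff j ∈
      vanishIdeal (tailsWithFiberCardGt V j : Set (Fin n → F)) := by
  rw [mem_vanishIdeal]
  intro t ht
  let fiber := {v ∈ V | Fin.tail v = t}
  have hfiber : j < Fintype.card fiber := by
    rw [Fintype.card_coe]
    exact (mem_filter.mp ht).2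
  have hinj : Function.Injective fun v : fiber => (v : Fin (n + 1) → F) 0 := by
    intro v w (h : (v : Fin (n + 1) → F) 0 = (w : Fin (n + 1) → F) 0)
    have hv := (mem_filter.mp v.2).2
    have hw := (mem_filter.mp w.2).2
    rw [Subtype.ext_iff, ← Fin.cons_self_tail (v : Fin (n + 1) → F),
      ← Fin.cons_self_tail (w : Fin (n + 1) → F), hv, hw, h]
  have hzero : (finSuccEquiv F n f).map (eval t) = 0 := by
    refine Polynomial.eq_zero_of_natDegree_lt_card_of_eval_eq_zero _ hinj (fun v => ?_) ?_
    · rw [← eval_eq_eval_mv_eval', ← (mem_filter.mp v.2).2, Fin.cons_self_tail]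
      exact hf _ (mem_filter.mp v.2).1
    · exact Polynomial.natDegree_map_le.trans_lt (hdeg.trans_lt hfiber)
  rw [← Polynomial.coeff_map, hzero, Polynomial.coeff_zero]

theorem cons_mem_lexStdMon [Field F] {V : Finset (Fin (n + 1) → F)} {j : ℕ} {u : Mon n}
    (hu : u ∈ lexStdMon 1 (vanishIdeal (tailsWithFiberCardGt V j : Set (Fin n → F)))) :
    u.cons j ∈ lexStdMon 1 (vanishIdeal (V : Set (Fin (n + 1) → F))) := by
  rintro ⟨f, hf, -, hlead⟩
  have hcoeff := hlead.coeff_finSuccEquiv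
  exact hu ⟨_, coeff_finSuccEquiv_mem_vanishIdeal hf hlead.natDegree_finSuccEquiv_le,
    ne_zero_iff.mpr ⟨u, mem_support_iff.mp hcoeff.1⟩, hcoeff⟩

end LexStdMonOfVanishIdeal

section LexStdMonEqStaircase

open Finset
open scoped Classical
variable {F : Type*} [Field F]

theorem lexStaircase_subset_lexStdMon :
    ∀ {n : ℕ} (V : Finset (Fin n → F)),
      ↑(lexStaircase V) ⊆ lexStdMon 1 (vanishIdeal (V : Set (Fin n → F)))
  | 0, V => by
    rintro _ hm ⟨f, hf, hf0, -⟩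
    obtain ⟨v, hv, -⟩ := mem_image.mp hm
    obtain ⟨c, rfl⟩ := C_surjective (Fin 0) f
    have hc : c = 0 := by simpa using hf v hv
    exact hf0 (by rw [hc, C_0])
  | n + 1, V => by
    intro m hm
    obtain ⟨j, -, u, hu, rfl⟩ := by
      simpa only [lexStaircase, mem_coe, mem_biUnion, mem_image] using hm
    exact cons_mem_lexStdMon (lexStaircase_subset_lexStdMon _ hu)

theorem lexStdMon_one_vanishIdeal {n : ℕ} (V : Finset (Fin n → F)) :
    lexStdMon 1 (vanishIdeal (V : Set (Fin n → F))) = lexStaircase V := by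
  refine Set.Subset.antisymm (fun m hm => ?_) (lexStaircase_subset_lexStdMon V)
  by_contra hmS
  have hcard := card_le_of_subset_lexStdMon V (insert m (lexStaircase V)) <| by
    rw [coe_insert]
    exact Set.insert_subset hm (lexStaircase_subset_lexStdMon V)
  rw [card_insert_of_notMem hmS, card_lexStaircase] at hcard
  omega

theorem lexStdMon_vanishIdeal_eq_preimage_lexStaircase {n : ℕ} (σ : Equiv.Perm (Fin n))
    (V : Finset (Fin n → F)) :
    lexStdMon σ (vanishIdeal (V : Set (Fin n → F))) =
      Finsupp.equivMapDomain σ.symm ⁻¹' lexStaircase (V.image (· ∘ σ)) := by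
  rw [lexStdMon_vanishIdeal, ← coe_image, lexStdMon_one_vanishIdeal]

end LexStdMonEqStaircase

open scoped Classical in
/-- universality of standard monomials.
Let `A ⊆ 𝔽` be finite, `𝒱 ⊆ Aⁿ` finite and `φᵢ : A → 𝔽̂` injective. Then for every
lexicographic order the standard monomials of `I(𝒱) ⊴ 𝔽[x]` coincide with those of
`I(𝒱̂) ⊴ 𝔽̂[x]`, where `𝒱̂` is the image of `𝒱` under `(φ₁,…,φₙ)`. -/
theorem stdMon_universality {n : ℕ} {F F' : Type*} [Field F] [Field F']
    (A : Finset F) (V : Finset (Fin n → F)) (hV : ∀ v ∈ V, ∀ i : Fin n, v i ∈ A)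
    (φ : Fin n → F → F') (hφ : ∀ i : Fin n, Set.InjOn (φ i) (A : Set F))
    (σ : Equiv.Perm (Fin n)) (lin : LinearOrder (Mon n)) (hlin : IsLexOrder σ lin) :
    stdMon lin (vanishIdeal (V : Set (Fin n → F))) =
      stdMon lin (vanishIdeal
        ((V.image (fun v (i : Fin n) => φ i (v i)) : Finset (Fin n → F')) :
          Set (Fin n → F'))) := by
  have hpermuted : ((V.image fun v => v ∘ σ) : Set (Fin n → F)) ⊆ Set.univ.pi fun _ => ↑A := by
    simp only [Finset.coe_image, Set.image_subset_iff]
    exact fun v hv i _ => hV v hv (σ i)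
  have himage : (V.image fun v (i : Fin n) => φ i (v i)).image (· ∘ σ) =
      (V.image (· ∘ σ)).image (Pi.map fun i => φ (σ i)) := by
    simp only [Finset.image_image]
    rfl
  rw [stdMon_eq_lexStdMon hlin, stdMon_eq_lexStdMon hlin,
    lexStdMon_vanishIdeal_eq_preimage_lexStaircase, lexStdMon_vanishIdeal_eq_preimage_lexStaircase,
    himage, lexStaircase_image_piMap (fun i => hφ (σ i)) hpermuted]
end
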